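/- Let p be a prime, n ≥ 1, and let F : ℤ_p^n → ℤ_p^n be a compatible function. Then F is ergodic with respect to the normalized Haar measure μ_p^{⊗n} on ℤ_p^n if and only if F is transitive modulo p^k for every k = 1, 2, 3, … -/

import Mathlib

open MeasureTheory Filter

/-- Borel measurable structure on the `p`-adic integers. -/
noncomputable instance padicMS (p : ℕ) [Fact p.Prime] : MeasurableSpace ℤ_[p] := borel _

instance padicBS (p : ℕ) [Fact p.Prime] : BorelSpace ℤ_[p] := ⟨rfl⟩

/-- The Haar measure `μ_p` on `ℤ_p`, normalized so that `μ_p(ℤ_p) = 1`. -/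
noncomputable def padicHaar (p : ℕ) [Fact p.Prime] : Measure ℤ_[p] :=
  Measure.addHaarMeasure (⊤ : TopologicalSpace.PositiveCompacts ℤ_[p])

/-- The map `f̄_k : ℤ/p^kℤ → ℤ/p^kℤ` induced by `f : ℤ_p → ℤ_p` via reduction
modulo `p^k` (well-defined whenever `f` is compatible, i.e. 1-Lipschitz). -/
noncomputable def modMap (p : ℕ) [Fact p.Prime] (f : ℤ_[p] → ℤ_[p]) (k : ℕ) :
    ZMod (p ^ k) → ZMod (p ^ k) :=
  fun z => PadicInt.toZModPow k (f ((z.val : ℕ) : ℤ_[p]))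

/-- The map `F̄_k : (ℤ/p^kℤ)^n → (ℤ/p^kℤ)^m` induced by `F : ℤ_p^n → ℤ_p^m` via
coordinatewise reduction modulo `p^k` (well-defined whenever `F` is compatible). -/
noncomputable def modMapV (p : ℕ) [Fact p.Prime] {n m : ℕ}
    (F : (Fin n → ℤ_[p]) → (Fin m → ℤ_[p])) (k : ℕ) :
    (Fin n → ZMod (p ^ k)) → (Fin m → ZMod (p ^ k)) :=
  fun v i => PadicInt.toZModPow k (F (fun j => ((v j).val : ℤ_[p])) i)

/-- The sphere `S_{p^{-r}}(y) = {z : ‖z - y‖ = p^{-r}}` in `ℤ_p`. -/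
def padicSphere (p : ℕ) [Fact p.Prime] (y : ℤ_[p]) (r : ℕ) : Set ℤ_[p] :=
  {z : ℤ_[p] | ‖z - y‖ = (p : ℝ) ^ (-(r : ℤ))}

/-- The probability measure on the sphere `S_{p^{-r}}(y)`, obtained by restricting the
normalized Haar measure `μ_p` to the sphere and normalizing. -/
noncomputable def sphereMeasure (p : ℕ) [Fact p.Prime] (y : ℤ_[p]) (r : ℕ) : Measure ℤ_[p] :=
  (padicHaar p (padicSphere p y r))⁻¹ • (padicHaar p).restrict (padicSphere p y r)

/-- `f` is ergodic on the sphere `S_{p^{-r}}(y)`: it maps the sphere into itself, preserves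
the normalized restriction of the Haar measure to the sphere, and every invariant
measurable subset of the sphere has normalized measure `0` or `1`. -/
def ErgodicOnSphere (p : ℕ) [Fact p.Prime] (f : ℤ_[p] → ℤ_[p]) (y : ℤ_[p]) (r : ℕ) : Prop :=
  Set.MapsTo f (padicSphere p y r) (padicSphere p y r) ∧
  (∀ A : Set ℤ_[p], MeasurableSet A →
      sphereMeasure p y r (f ⁻¹' A) = sphereMeasure p y r A) ∧
  (∀ A : Set ℤ_[p], MeasurableSet A → A ⊆ padicSphere p y r →
      f ⁻¹' A ∩ padicSphere p y r = A →
      sphereMeasure p y r A = 0 ∨ sphereMeasure p y r A = 1)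

/-- `d ∈ ℤ_p` is primitive modulo `p²`: its image in `ℤ/p²ℤ` generates the whole
group of units `(ℤ/p²ℤ)ˣ`. -/
def PrimitiveModSq (p : ℕ) [Fact p.Prime] (d : ℤ_[p]) : Prop :=
  ∃ u : (ZMod (p ^ 2))ˣ, (u : ZMod (p ^ 2)) = PadicInt.toZModPow 2 d ∧
    ∀ v : (ZMod (p ^ 2))ˣ, v ∈ Subgroup.zpowers u

/-!
Compatibility says exactly that reduction modulo `p ^ k` semiconjugates `F` to `F̄_k`. The fibres
of the reductions (the balls of radius `p ^ (-k)`) form a π-system generating the Borel σ-algebra,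
and each has measure `p ^ (-k n)`.

If `F` preserves measure, no fibre can have empty preimage, so every `F̄_k` is onto, hence a
permutation. The preimage of an `F̄_k`-invariant set of residues is an `F`-invariant union of
fibres, so ergodicity forces it to be everything: `F̄_k` is a single cycle.

Conversely, if every `F̄_k` is a single cycle, `F` permutes the fibres of each level and so
preserves measure. An invariant set `A` then meets all fibres of a level in the same measure, so
`μ (A ∩ C) = μ A * μ C` on the generating π-system, and `A` is independent of itself.
-/

open scoped ENNReal
open Metric

namespace PadicInt

variable {p : ℕ} [Fact p.Prime]

theorem toZModPow_eq_iff_norm_sub_le (k : ℕ) (x y : ℤ_[p]) :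
    toZModPow k x = toZModPow k y ↔ ‖x - y‖ ≤ (p : ℝ) ^ (-(k : ℤ)) := by
  rw [norm_le_pow_iff_mem_span_pow, ← sub_eq_zero, ← map_sub, ← RingHom.mem_ker, ker_toZModPow]

theorem toZModPow_natCast_val (k : ℕ) (c : ZMod (p ^ k)) : toZModPow k (c.val : ℤ_[p]) = c := by
  have : NeZero (p ^ k) := ⟨pow_ne_zero k (Fact.out : p.Prime).ne_zero⟩
  rw [map_natCast, ZMod.natCast_zmod_val]

theorem coe_ker_toZModPow (k : ℕ) :
    ((toZModPow k : ℤ_[p] →+* ZMod (p ^ k)).toAddMonoidHom.ker : Set ℤ_[p]) =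
      closedBall 0 ((p : ℝ) ^ (-(k : ℤ))) := by
  ext x
  rw [SetLike.mem_coe, AddMonoidHom.mem_ker, mem_closedBall, dist_zero_right,
    RingHom.toAddMonoidHom_eq_coe, AddMonoidHom.coe_coe, ← map_zero (toZModPow k),
    toZModPow_eq_iff_norm_sub_le, sub_zero]

theorem index_ker_toZModPow (k : ℕ) :
    (toZModPow k : ℤ_[p] →+* ZMod (p ^ k)).toAddMonoidHom.ker.index = p ^ k := by
  have : NeZero (p ^ k) := ⟨pow_ne_zero k (Fact.out : p.Prime).ne_zero⟩
  rw [AddSubgroup.index_ker, AddMonoidHom.range_eq_top.mpr (ZMod.ringHom_surjective _)]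
  simp

end PadicInt

section Haar

variable (p : ℕ) [Fact p.Prime]

instance : IsProbabilityMeasure (padicHaar p) := by
  have := Measure.addHaarMeasure_self (K₀ := (⊤ : TopologicalSpace.PositiveCompacts ℤ_[p]))
  exact ⟨by simpa [padicHaar] using this⟩

instance : (padicHaar p).IsAddLeftInvariant := by
  unfold padicHaar; infer_instance

theorem padicHaar_closedBall (a : ℤ_[p]) (k : ℕ) :
    padicHaar p (closedBall a ((p : ℝ) ^ (-(k : ℤ)))) = ((p : ℝ≥0∞) ^ k)⁻¹ := by
  set H := (PadicInt.toZModPow k : ℤ_[p] →+* ZMod (p ^ k)).toAddMonoidHom.ker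
  have hindex : H.index = p ^ k := PadicInt.index_ker_toZModPow k
  have : H.FiniteIndex := ⟨by rw [hindex]; exact pow_ne_zero k (Fact.out : p.Prime).ne_zero⟩
  have hH : padicHaar p H = ((p : ℝ≥0∞) ^ k)⁻¹ := by
    have := H.index_mul_measure
      (by rw [PadicInt.coe_ker_toZModPow]; exact measurableSet_closedBall) (padicHaar p)
    rw [hindex, measure_univ, Nat.cast_pow] at this
    exact ENNReal.eq_inv_of_mul_eq_one_left (by rwa [mul_comm] at this)
  have htrans : closedBall a ((p : ℝ) ^ (-(k : ℤ))) = (fun x => -a + x) ⁻¹' H := by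
    ext x
    rw [Set.mem_preimage, PadicInt.coe_ker_toZModPow, mem_closedBall,
      mem_closedBall, dist_zero_right, dist_eq_norm, neg_add_eq_sub]
  rw [htrans, measure_preimage_add, hH]

end Haar

section Cylinders

variable (p : ℕ) [Fact p.Prime] {ι : Type*}

noncomputable def reduceModPow (k : ℕ) (x : ι → ℤ_[p]) : ι → ZMod (p ^ k) :=
  fun i => PadicInt.toZModPow k (x i)

def padicCylinders (ι : Type*) : Set (Set (ι → ℤ_[p])) :=
  {s | ∃ k v, s = reduceModPow p k ⁻¹' {v}}

noncomputable abbrev padicHaarPi (ι : Type*) [Fintype ι] : Measure (ι → ℤ_[p]) :=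
  Measure.pi fun _ : ι => padicHaar p

variable {p}

theorem reduceModPow_natCast_val (k : ℕ) (v : ι → ZMod (p ^ k)) :
    reduceModPow p k (fun i => ((v i).val : ℤ_[p])) = v :=
  funext fun i => PadicInt.toZModPow_natCast_val k (v i)

variable [Fintype ι]

theorem reduceModPow_eq_iff_norm_sub_le (k : ℕ) (x y : ι → ℤ_[p]) :
    reduceModPow p k x = reduceModPow p k y ↔ ‖x - y‖ ≤ (p : ℝ) ^ (-(k : ℤ)) := by
  rw [funext_iff, pi_norm_le_iff_of_nonneg (by positivity)]
  exact forall_congr' fun i => PadicInt.toZModPow_eq_iff_norm_sub_le k (x i) (y i)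

theorem reduceModPow_preimage_singleton_self (k : ℕ) (x : ι → ℤ_[p]) :
    reduceModPow p k ⁻¹' {reduceModPow p k x} = closedBall x ((p : ℝ) ^ (-(k : ℤ))) := by
  ext y
  rw [Set.mem_preimage, Set.mem_singleton_iff, reduceModPow_eq_iff_norm_sub_le, mem_closedBall,
    dist_eq_norm]

theorem reduceModPow_preimage_singleton (k : ℕ) (v : ι → ZMod (p ^ k)) :
    reduceModPow p k ⁻¹' {v} =
      closedBall (fun i => ((v i).val : ℤ_[p])) ((p : ℝ) ^ (-(k : ℤ))) := by
  conv_lhs => rw [← reduceModPow_natCast_val k v]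
  exact reduceModPow_preimage_singleton_self k _

theorem measurableSet_reduceModPow_preimage_singleton (k : ℕ) (v : ι → ZMod (p ^ k)) :
    MeasurableSet (reduceModPow p k ⁻¹' {v}) := by
  rw [reduceModPow_preimage_singleton]
  exact measurableSet_closedBall

theorem measurableSet_reduceModPow_preimage (k : ℕ) (s : Set (ι → ZMod (p ^ k))) :
    MeasurableSet (reduceModPow p k ⁻¹' s) := by
  rw [← Set.biUnion_preimage_singleton]
  exact .biUnion s.to_countable fun v _ => measurableSet_reduceModPow_preimage_singleton k v

theorem padicHaarPi_reduceModPow_preimage_singleton (k : ℕ) (v : ι → ZMod (p ^ k)) :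
    padicHaarPi p ι (reduceModPow p k ⁻¹' {v}) = ((p : ℝ≥0∞) ^ k)⁻¹ ^ Fintype.card ι := by
  rw [reduceModPow_preimage_singleton, closedBall_pi _ (by positivity), Measure.pi_pi]
  simp only [padicHaar_closedBall, Finset.prod_const, Finset.card_univ]

theorem padicHaarPi_reduceModPow_preimage_singleton_ne_zero (k : ℕ) (v : ι → ZMod (p ^ k)) :
    padicHaarPi p ι (reduceModPow p k ⁻¹' {v}) ≠ 0 := by
  rw [padicHaarPi_reduceModPow_preimage_singleton]
  exact pow_ne_zero _ (ENNReal.inv_ne_zero.mpr (ENNReal.pow_ne_top (ENNReal.natCast_ne_top p)))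

theorem isTopologicalBasis_padicCylinders :
    TopologicalSpace.IsTopologicalBasis (padicCylinders p ι) := by
  refine TopologicalSpace.isTopologicalBasis_of_isOpen_of_nhds ?_ fun x U hxU hU => ?_
  · rintro _ ⟨k, v, rfl⟩
    rw [reduceModPow_preimage_singleton]
    exact IsUltrametricDist.isOpen_closedBall _
      (zpow_pos (by exact_mod_cast (Fact.out : p.Prime).pos) _).ne'
  · obtain ⟨ε, hε, hball⟩ := Metric.isOpen_iff.mp hU x hxU
    obtain ⟨k, hk⟩ := PadicInt.exists_pow_neg_lt p hε
    refine ⟨_, ⟨k, reduceModPow p k x, rfl⟩, rfl, ?_⟩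
    rw [reduceModPow_preimage_singleton_self]
    exact (closedBall_subset_ball hk).trans hball

theorem reduceModPow_preimage_singleton_self_subset_of_le {k l : ℕ} (hkl : k ≤ l) (x : ι → ℤ_[p]) :
    reduceModPow p l ⁻¹' {reduceModPow p l x} ⊆ reduceModPow p k ⁻¹' {reduceModPow p k x} := by
  rw [reduceModPow_preimage_singleton_self, reduceModPow_preimage_singleton_self]
  exact closedBall_subset_closedBall
    (zpow_le_zpow_right₀ (by exact_mod_cast (Fact.out : p.Prime).one_le) (by omega))

theorem isPiSystem_padicCylinders : IsPiSystem (padicCylinders p ι) := by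
  rintro _ ⟨k, v, rfl⟩ _ ⟨l, w, rfl⟩ ⟨x, hxv, hxw⟩
  rw [Set.mem_preimage, Set.mem_singleton_iff] at hxv hxw
  subst hxv hxw
  rcases le_total k l with hkl | hlk
  · exact ⟨l, _, Set.inter_eq_right.mpr (reduceModPow_preimage_singleton_self_subset_of_le hkl x)⟩
  · exact ⟨k, _, Set.inter_eq_left.mpr (reduceModPow_preimage_singleton_self_subset_of_le hlk x)⟩

theorem measurableSpace_pi_eq_generateFrom_padicCylinders :
    (MeasurableSpace.pi : MeasurableSpace (ι → ℤ_[p])) =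
      MeasurableSpace.generateFrom (padicCylinders p ι) := by
  rw [← isTopologicalBasis_padicCylinders.borel_eq_generateFrom,
    BorelSpace.measurable_eq (α := ι → ℤ_[p])]

end Cylinders

section Dynamics

open Function

theorem Function.Semiconj.preimage_preimage {α β : Type*} {f : α → β} {ga : α → α}
    {gb : β → β} (h : Semiconj f ga gb) (s : Set β) : ga ⁻¹' (f ⁻¹' s) = f ⁻¹' (gb ⁻¹' s) := by
  rw [← Set.preimage_comp, h.comp_eq, Set.preimage_comp]

theorem Function.bijective_of_forall_exists_iterate_eq {α : Type*} [Finite α] {g : α → α}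
    (h : ∀ x z, ∃ j, g^[j] x = z) : Bijective g := by
  refine Finite.surjective_iff_bijective.mp fun z => ?_
  obtain ⟨j, hj⟩ := h (g z) z
  exact ⟨g^[j] z, by rwa [← iterate_succ_apply' g j z, iterate_succ_apply]⟩

theorem Function.Bijective.exists_iterate_eq_of_invariant {α : Type*} [Finite α] {g : α → α}
    (hg : Bijective g) (hinv : ∀ s : Set α, g ⁻¹' s = s → s.Nonempty → s = Set.univ)
    (x z : α) : ∃ j, g^[j] x = z := by
  set σ : Equiv.Perm α := Equiv.ofBijective g hg
  have hcycle : {y | σ.SameCycle x y} = Set.univ :=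
    hinv _ (Set.ext fun _ => Equiv.Perm.sameCycle_apply_right) ⟨x, Equiv.Perm.SameCycle.refl σ x⟩
  obtain ⟨j, hj⟩ := (Set.eq_univ_iff_forall.mp hcycle z).exists_nat_pow_eq
  exact ⟨j, by rwa [show g = σ from rfl, Equiv.Perm.iterate_eq_pow]⟩

end Dynamics

section ZeroOne

variable {X : Type*} [MeasurableSpace X] {μ : Measure X} [IsProbabilityMeasure μ]

theorem measure_inter_preimage_singleton_eq_mul {Y : Type*} [Fintype Y] {f : X → Y}
    (hf : ∀ y, MeasurableSet (f ⁻¹' {y})) (A : Set X)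
    (hμf : ∀ y y', μ (f ⁻¹' {y}) = μ (f ⁻¹' {y'}))
    (hAf : ∀ y y', μ (A ∩ f ⁻¹' {y}) = μ (A ∩ f ⁻¹' {y'})) (y : Y) :
    μ (A ∩ f ⁻¹' {y}) = μ A * μ (f ⁻¹' {y}) := by
  have hsum : ∀ ν : Measure X, ∑ y', ν (f ⁻¹' {y'}) = ν Set.univ := fun ν => by
    rw [sum_measure_preimage_singleton _ fun y _ => hf y, Finset.coe_univ, Set.preimage_univ]
  have hfibre : Fintype.card Y * μ (f ⁻¹' {y}) = 1 := by
    rw [← measure_univ (μ := μ), ← hsum μ, Finset.sum_congr rfl fun y' _ => hμf y' y,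
      Finset.sum_const, nsmul_eq_mul, Finset.card_univ]
  have hA : Fintype.card Y * μ (A ∩ f ⁻¹' {y}) = μ A := by
    have hslice : ∀ y', μ.restrict A (f ⁻¹' {y'}) = μ (A ∩ f ⁻¹' {y}) := fun y' => by
      rw [Measure.restrict_apply (hf y'), Set.inter_comm, hAf]
    rw [← Finset.card_univ, ← nsmul_eq_mul, ← Finset.sum_const,
      ← Finset.sum_congr rfl fun y' _ => hslice y', hsum, Measure.restrict_apply_univ]
  calc μ (A ∩ f ⁻¹' {y}) = μ (A ∩ f ⁻¹' {y}) * (Fintype.card Y * μ (f ⁻¹' {y})) := by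
        rw [hfibre, mul_one]
    _ = Fintype.card Y * μ (A ∩ f ⁻¹' {y}) * μ (f ⁻¹' {y}) := by ring
    _ = μ A * μ (f ⁻¹' {y}) := by rw [hA]

theorem measure_eq_zero_or_one_of_forall_measure_inter_eq_mul {C : Set (Set X)}
    (hgen : ‹MeasurableSpace X› = MeasurableSpace.generateFrom C) (hC : IsPiSystem C)
    {A : Set X} (hA : MeasurableSet A) (hAC : ∀ s ∈ C, μ (A ∩ s) = μ A * μ s) :
    μ A = 0 ∨ μ A = 1 := by
  have hrestrict : μ.restrict A = μ A • μ := by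
    refine ext_of_generate_finite C hgen hC (fun s hs => ?_) (by simp)
    rw [Measure.restrict_apply (hgen ▸ MeasurableSpace.measurableSet_generateFrom hs),
      Set.inter_comm, hAC s hs, Measure.smul_apply, smul_eq_mul]
  -- Independence from the generators passes to the whole σ-algebra, in particular to `A`.
  refine ProbabilityTheory.measure_eq_zero_or_one_of_indepSet_self
    ((ProbabilityTheory.indepSet_iff_measure_inter_eq_mul hA hA μ).mpr ?_)
  simpa [hA] using congrArg (· A) hrestrict

end ZeroOne

theorem continuous_of_norm_sub_le {E E' : Type*} [SeminormedAddCommGroup E]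
    [SeminormedAddCommGroup E'] {f : E → E'} (hf : ∀ x y, ‖f x - f y‖ ≤ ‖x - y‖) : Continuous f :=
  (LipschitzWith.mk_one fun x y => by simpa only [dist_eq_norm] using hf x y).continuous

section Ergodicity

open Function

variable {p : ℕ} [Fact p.Prime] {n : ℕ} {F : (Fin n → ℤ_[p]) → (Fin n → ℤ_[p])}

theorem semiconj_reduceModPow_modMapV (hF : ∀ x y, ‖F x - F y‖ ≤ ‖x - y‖) (k : ℕ) :
    Semiconj (reduceModPow p k) F (modMapV p F k) := fun _ =>
  (reduceModPow_eq_iff_norm_sub_le k _ _).mpr <| (hF _ _).trans <|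
    (reduceModPow_eq_iff_norm_sub_le k _ _).mp (reduceModPow_natCast_val k _).symm



theorem surjective_modMapV_of_measurePreserving (hF : ∀ x y, ‖F x - F y‖ ≤ ‖x - y‖)
    (hμ : MeasurePreserving F (padicHaarPi p (Fin n)) (padicHaarPi p (Fin n))) (k : ℕ) :
    Surjective (modMapV p F k) := by
  intro v
  by_contra! hv
  apply padicHaarPi_reduceModPow_preimage_singleton_ne_zero k v
  rw [← hμ.measure_preimage (measurableSet_reduceModPow_preimage k {v}).nullMeasurableSet,
    (semiconj_reduceModPow_modMapV hF k).preimage_preimage,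
    Set.preimage_singleton_eq_empty.mpr (by simpa [Set.mem_range] using hv),
    Set.preimage_empty, measure_empty]

theorem eq_univ_of_modMapV_preimage_eq_of_ergodic (hF : ∀ x y, ‖F x - F y‖ ≤ ‖x - y‖)
    (herg : ∀ A, MeasurableSet A → F ⁻¹' A = A →
      padicHaarPi p (Fin n) A = 0 ∨ padicHaarPi p (Fin n) A = 1)
    {k : ℕ} {s : Set (Fin n → ZMod (p ^ k))} (hs : modMapV p F k ⁻¹' s = s)
    (hne : s.Nonempty) : s = Set.univ := by
  have hA := measurableSet_reduceModPow_preimage k s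
  have hAinv : F ⁻¹' (reduceModPow p k ⁻¹' s) = reduceModPow p k ⁻¹' s := by
    rw [(semiconj_reduceModPow_modMapV hF k).preimage_preimage, hs]
  obtain ⟨w, hw⟩ := hne
  have hA1 : padicHaarPi p (Fin n) (reduceModPow p k ⁻¹' s) = 1 :=
    (herg _ hA hAinv).resolve_left fun h => padicHaarPi_reduceModPow_preimage_singleton_ne_zero k w
      (measure_mono_null (Set.preimage_mono (Set.singleton_subset_iff.mpr hw)) h)
  have hAc : padicHaarPi p (Fin n) (reduceModPow p k ⁻¹' sᶜ) = 0 := by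
    rw [Set.preimage_compl, prob_compl_eq_zero_iff hA, hA1]
  refine Set.eq_univ_of_forall fun v => by_contra fun hv =>
    padicHaarPi_reduceModPow_preimage_singleton_ne_zero k v (measure_mono_null ?_ hAc)
  exact Set.preimage_mono (Set.singleton_subset_iff.mpr hv)

theorem exists_iterate_modMapV_eq_of_ergodic (hF : ∀ x y, ‖F x - F y‖ ≤ ‖x - y‖)
    (hμ : MeasurePreserving F (padicHaarPi p (Fin n)) (padicHaarPi p (Fin n)))
    (herg : ∀ A, MeasurableSet A → F ⁻¹' A = A →
      padicHaarPi p (Fin n) A = 0 ∨ padicHaarPi p (Fin n) A = 1)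
    (k : ℕ) (x z : Fin n → ZMod (p ^ k)) : ∃ j, (modMapV p F k)^[j] x = z :=
  (Finite.surjective_iff_bijective.mp (surjective_modMapV_of_measurePreserving hF hμ k)
    ).exists_iterate_eq_of_invariant
      (fun _ hs hne => eq_univ_of_modMapV_preimage_eq_of_ergodic hF herg hs hne) x z

theorem measurePreserving_of_bijective_modMapV (hF : ∀ x y, ‖F x - F y‖ ≤ ‖x - y‖)
    (hbij : ∀ k, Bijective (modMapV p F k)) :
    MeasurePreserving F (padicHaarPi p (Fin n)) (padicHaarPi p (Fin n)) := by
  have hFm := (continuous_of_norm_sub_le hF).measurable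
  refine ⟨hFm, ext_of_generate_finite _ measurableSpace_pi_eq_generateFrom_padicCylinders
    isPiSystem_padicCylinders ?_ (by simp [Measure.map_apply hFm MeasurableSet.univ])⟩
  rintro _ ⟨k, v, rfl⟩
  obtain ⟨w, rfl⟩ := (hbij k).surjective v
  rw [Measure.map_apply hFm (measurableSet_reduceModPow_preimage_singleton k _),
    (semiconj_reduceModPow_modMapV hF k).preimage_preimage, ← Set.image_singleton,
    (hbij k).injective.preimage_image, Set.image_singleton,
    padicHaarPi_reduceModPow_preimage_singleton, padicHaarPi_reduceModPow_preimage_singleton]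

theorem padicHaarPi_inter_reduceModPow_preimage_singleton_eq
    (hF : ∀ x y, ‖F x - F y‖ ≤ ‖x - y‖)
    (htrans : ∀ k, ∀ x z : Fin n → ZMod (p ^ k), ∃ j, (modMapV p F k)^[j] x = z)
    {A : Set (Fin n → ℤ_[p])} (hA : MeasurableSet A) (hAinv : F ⁻¹' A = A)
    (k : ℕ) (v w : Fin n → ZMod (p ^ k)) :
    padicHaarPi p (Fin n) (A ∩ reduceModPow p k ⁻¹' {v}) =
      padicHaarPi p (Fin n) (A ∩ reduceModPow p k ⁻¹' {w}) := by
  have hbij k := bijective_of_forall_exists_iterate_eq (htrans k)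
  have hμ := measurePreserving_of_bijective_modMapV hF hbij
  obtain ⟨j, rfl⟩ := htrans k w v
  have hpre : F^[j] ⁻¹' (A ∩ reduceModPow p k ⁻¹' {(modMapV p F k)^[j] w}) =
      A ∩ reduceModPow p k ⁻¹' {w} := by
    rw [Set.preimage_inter, Set.preimage_iterate_eq, iterate_fixed hAinv, ← Set.preimage_iterate_eq,
      ((semiconj_reduceModPow_modMapV hF k).iterate_right j).preimage_preimage,
      ← Set.image_singleton, ((hbij k).injective.iterate j).preimage_image]
  rw [← hpre, (hμ.iterate j).measure_preimage
    (hA.inter (measurableSet_reduceModPow_preimage_singleton k _)).nullMeasurableSet]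

theorem measure_eq_zero_or_one_of_transitive (hF : ∀ x y, ‖F x - F y‖ ≤ ‖x - y‖)
    (htrans : ∀ k, ∀ x z : Fin n → ZMod (p ^ k), ∃ j, (modMapV p F k)^[j] x = z)
    {A : Set (Fin n → ℤ_[p])} (hA : MeasurableSet A) (hAinv : F ⁻¹' A = A) :
    padicHaarPi p (Fin n) A = 0 ∨ padicHaarPi p (Fin n) A = 1 := by
  refine measure_eq_zero_or_one_of_forall_measure_inter_eq_mul
    measurableSpace_pi_eq_generateFrom_padicCylinders isPiSystem_padicCylinders hA ?_
  rintro _ ⟨k, v, rfl⟩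
  refine measure_inter_preimage_singleton_eq_mul (measurableSet_reduceModPow_preimage_singleton k)
    A (fun v w => ?_) (padicHaarPi_inter_reduceModPow_preimage_singleton_eq hF htrans hA hAinv k) v
  rw [padicHaarPi_reduceModPow_preimage_singleton, padicHaarPi_reduceModPow_preimage_singleton]

end Ergodicity

theorem ergodic_iff_transitive_mod_multivariate_general (p n : ℕ) [Fact p.Prime]
    (F : (Fin n → ℤ_[p]) → (Fin n → ℤ_[p]))
    (hF : ∀ x y : Fin n → ℤ_[p], ‖F x - F y‖ ≤ ‖x - y‖) :
    ((∀ A : Set (Fin n → ℤ_[p]), MeasurableSet A →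
        (Measure.pi fun _ : Fin n => padicHaar p) (F ⁻¹' A) =
          (Measure.pi fun _ : Fin n => padicHaar p) A) ∧
      (∀ A : Set (Fin n → ℤ_[p]), MeasurableSet A → F ⁻¹' A = A →
        (Measure.pi fun _ : Fin n => padicHaar p) A = 0 ∨
          (Measure.pi fun _ : Fin n => padicHaar p) A = 1)) ↔
      ∀ k : ℕ, 1 ≤ k → ∀ x z : Fin n → ZMod (p ^ k),
        ∃ j : ℕ, (modMapV p F k)^[j] x = z := by
  constructor
  · rintro ⟨hpres, herg⟩ k - x z
    have hFm := (continuous_of_norm_sub_le hF).measurable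
    have hμ : MeasurePreserving F (padicHaarPi p (Fin n)) (padicHaarPi p (Fin n)) :=
      ⟨hFm, Measure.ext fun A hA => by rw [Measure.map_apply hFm hA, hpres A hA]⟩
    exact exists_iterate_modMapV_eq_of_ergodic hF hμ herg k x z
  · intro htrans
    have htrans' : ∀ k, ∀ x z : Fin n → ZMod (p ^ k), ∃ j, (modMapV p F k)^[j] x = z := by
      rintro (_ | k) x z
      · exact ⟨0, funext fun i => (Fin.subsingleton_one).elim (x i) (z i)⟩
      · exact htrans (k + 1) k.succ_pos x z
    exact ⟨fun A hA => (measurePreserving_of_bijective_modMapV hF fun k =>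
        Function.bijective_of_forall_exists_iterate_eq (htrans' k)).measure_preimage
          hA.nullMeasurableSet,
      fun A hA hAinv => measure_eq_zero_or_one_of_transitive hF htrans' hA hAinv⟩

/-- A compatible function `F : ℤ_p^n → ℤ_p^n` (with `n ≥ 1`) is ergodic with respect to
the normalized Haar measure on `ℤ_p^n` if and only if it is transitive modulo `p^k`
for every `k ≥ 1`. -/
theorem ergodic_iff_transitive_mod_multivariate (p n : ℕ) [Fact p.Prime] (hn : 1 ≤ n)
    (F : (Fin n → ℤ_[p]) → (Fin n → ℤ_[p]))
    (hF : ∀ x y : Fin n → ℤ_[p], ‖F x - F y‖ ≤ ‖x - y‖) :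
    ((∀ A : Set (Fin n → ℤ_[p]), MeasurableSet A →
        (Measure.pi fun _ : Fin n => padicHaar p) (F ⁻¹' A) =
          (Measure.pi fun _ : Fin n => padicHaar p) A) ∧
      (∀ A : Set (Fin n → ℤ_[p]), MeasurableSet A → F ⁻¹' A = A →
        (Measure.pi fun _ : Fin n => padicHaar p) A = 0 ∨
          (Measure.pi fun _ : Fin n => padicHaar p) A = 1)) ↔
      ∀ k : ℕ, 1 ≤ k → ∀ x z : Fin n → ZMod (p ^ k),
        ∃ j : ℕ, (modMapV p F k)^[j] x = z :=
  ergodic_iff_transitive_mod_multivariate_general p n F hF
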